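/- For every tuple x ∈ B^{2^{2^n}+1}, the value g(x) occurs among the coordinates of x. Consequently, g is compatible with every unary relation X ⊆ B, i.e., g maps X^{2^{2^n}+1} into X for every X ⊆ B. -/
import Mathlib


/- The universe `B = {a₁, a₂, 0, 1, ..., n}` of size `n+3` is encoded as
`Fin (n+3)`, where `a₁` is encoded as `0`, `a₂` as `1`, and the element
`i ∈ {0, ..., n}` as `i+2`. -/

/-- `L_r(x)`: the number of coordinates of `x` whose value is strictly less than the
element `r` in the order `a₁ < a₂ < 0 < 1 < ⋯ < n` (encoded: value `< r + 2`);
for `r = n+1` this counts all coordinates. -/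
def Lb (n : ℕ) {K : ℕ} (x : Fin K → Fin (n + 3)) (r : ℕ) : ℕ :=
  (Finset.univ.filter (fun q => (x q).val < r + 2)).card

/-- `F_x = {r ∈ {0, …, n} : L_{r+1}(x) > 2^(2^r) · L_r(x)}`. -/
def FsetB (n : ℕ) {K : ℕ} (x : Fin K → Fin (n + 3)) : Finset ℕ :=
  (Finset.range (n + 1)).filter (fun r => 2 ^ 2 ^ r * Lb n x r < Lb n x (r + 1))

/-- The operation `g : B^(2^(2^n)+1) → B`: `g(x) = max F_x` if `F_x ≠ ∅` (the element
`max F_x`, encoded as `max F_x + 2`); otherwise `g(x) = a₂` if the number of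
coordinates equal to `a₂` exceeds the number equal to `a₁`, and `g(x) = a₁` else. -/
def gop (n : ℕ) (x : Fin (2 ^ 2 ^ n + 1) → Fin (n + 3)) : Fin (n + 3) :=
  if h : (FsetB n x).Nonempty then
    ⟨(FsetB n x).max' h + 2, by
      have hmem := (FsetB n x).max'_mem h
      have h2 : (FsetB n x).max' h < n + 1 :=
        Finset.mem_range.mp (Finset.mem_filter.mp hmem).1
      omega⟩
  else if (Finset.univ.filter (fun q => x q = 1)).card >
      (Finset.univ.filter (fun q => x q = 0)).card then 1
  else 0

/-- The value `g(x)` occurs among the coordinates of `x`; consequently `g` is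
compatible with every unary relation `X ⊆ B`. -/
theorem stmt17 (n : ℕ) :
    (∀ x : Fin (2 ^ 2 ^ n + 1) → Fin (n + 3), ∃ q, x q = gop n x) ∧
    (∀ X : Set (Fin (n + 3)), ∀ x : Fin (2 ^ 2 ^ n + 1) → Fin (n + 3),
      (∀ q, x q ∈ X) → gop n x ∈ X) := by
  have main : ∀ x : Fin (2 ^ 2 ^ n + 1) → Fin (n + 3), ∃ q, x q = gop n x := by
    intro x
    unfold gop
    split_ifs with h h2
    · set r := (FsetB n x).max' h with hr
      have hmem := (FsetB n x).max'_mem h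
      have hlt : 2 ^ 2 ^ r * Lb n x r < Lb n x (r + 1) :=
        (Finset.mem_filter.mp hmem).2
      have hpos : 1 ≤ 2 ^ 2 ^ r := Nat.one_le_two_pow
      have hLr : Lb n x r < Lb n x (r + 1) := by
        nlinarith
      have hsub : (Finset.univ.filter (fun q => (x q).val < r + 2)) ⊆
          (Finset.univ.filter (fun q => (x q).val < r + 1 + 2)) := by
        intro q hq
        simp only [Finset.mem_filter, Finset.mem_univ, true_and] at hq ⊢
        omega
      have hd : 0 < ((Finset.univ.filter (fun q => (x q).val < r + 1 + 2)) \
          (Finset.univ.filter (fun q => (x q).val < r + 2))).card := by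
        rw [Finset.card_sdiff_of_subset hsub]
        unfold Lb at hLr
        omega
      obtain ⟨q, hq⟩ := Finset.card_pos.mp hd
      rw [Finset.mem_sdiff] at hq
      obtain ⟨hq1, hq2⟩ := hq
      simp only [Finset.mem_filter, Finset.mem_univ, true_and] at hq1 hq2
      refine ⟨q, ?_⟩
      apply Fin.ext
      simp only
      omega
    · have : 0 < (Finset.univ.filter (fun q => x q = 1)).card := by omega
      obtain ⟨q, hq⟩ := Finset.card_pos.mp this
      simp only [Finset.mem_filter, Finset.mem_univ, true_and] at hq
      exact ⟨q, hq⟩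
    · by_contra hc
      push_neg at hc
      have hc0 : (Finset.univ.filter (fun q => x q = 0)).card = 0 := by
        rw [Finset.card_eq_zero, Finset.filter_eq_empty_iff]
        intro q _; exact hc q
      have hc1 : (Finset.univ.filter (fun q => x q = 1)).card = 0 := by omega
      have hL0 : Lb n x 0 = 0 := by
        rw [Lb, Finset.card_eq_zero, Finset.filter_eq_empty_iff]
        intro q _
        have h0 : x q ≠ 0 := by
          intro he
          have : q ∈ Finset.univ.filter (fun q => x q = 0) := by
            simp [he]
          rw [Finset.card_eq_zero] at hc0
          simp [hc0] at this
        have h1 : x q ≠ 1 := by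
          intro he
          have : q ∈ Finset.univ.filter (fun q => x q = 1) := by
            simp [he]
          rw [Finset.card_eq_zero] at hc1
          simp [hc1] at this
        have h0' : (x q).val ≠ 0 := fun he => h0 (Fin.ext (by simpa using he))
        have h1' : (x q).val ≠ 1 := fun he => h1 (Fin.ext (by simpa using he))
        omega
      have hstep : ∀ r, r ≤ n + 1 → Lb n x r = 0 := by
        intro r
        induction r with
        | zero => intro _; exact hL0
        | succ m ih =>
          intro hm
          have hmem : ¬ (2 ^ 2 ^ m * Lb n x m < Lb n x (m + 1)) := by
            intro hlt
            exact h ⟨m, Finset.mem_filter.mpr ⟨Finset.mem_range.mpr (by omega), hlt⟩⟩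
          have hz := ih (by omega)
          rw [hz, mul_zero] at hmem
          omega
      have hfin : Lb n x (n + 1) = 0 := hstep (n + 1) le_rfl
      have hall : Lb n x (n + 1) = 2 ^ 2 ^ n + 1 := by
        rw [Lb]
        have : Finset.univ.filter (fun q : Fin (2 ^ 2 ^ n + 1) => (x q).val < n + 1 + 2) =
            Finset.univ := by
          apply Finset.filter_true_of_mem
          intro q _
          exact (x q).isLt
        rw [this, Finset.card_univ, Fintype.card_fin]
      rw [hfin] at hall
      exact (Nat.succ_ne_zero _) hall.symm
  refine ⟨main, fun X x hx => ?_⟩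
  obtain ⟨q, hq⟩ := main x
  exact hq ▸ hx q
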